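/- Let 0 < F₂ < F₁, F₂ < F₃ and 1 < A < B, with F(x) = F₁ for 0 ≤ x < A, F(x) = F₂ for A ≤ x < B, F(x) = F₃ for x ≥ B, and suppose v(x) = 0 for all x ∈ [0,1]. Then there are no collisions on [0,∞) if and only if B − A ≤ α(A − 1), where α = F₁(F₃ − F₁)(F₃(F₁ − F₂) + F₁(F₃ − F₂)) / ((F₁ − F₂)² F₃²). -/

import Mathlib

open Set

/-- Trajectory of the particle starting at rest at `x`, moving with constant acceleration
`F₁ > 0` until its position first reaches `A`, then with constant acceleration `F₂ > 0`
until its position first reaches `B`, and with constant acceleration `F₃ > 0` afterwards. -/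
noncomputable def twoStepTraj (F₁ F₂ F₃ A B x t : ℝ) : ℝ :=
  let TA := Real.sqrt (2 * (A - x) / F₁)
  let vA := F₁ * TA
  let s := (-vA + Real.sqrt (vA ^ 2 + 2 * F₂ * (B - A))) / F₂
  let TB := TA + s
  let vB := vA + F₂ * s
  if t ≤ TA then x + F₁ * t ^ 2 / 2
  else if t ≤ TB then A + vA * (t - TA) + F₂ * (t - TA) ^ 2 / 2
  else B + vB * (t - TB) + F₃ * (t - TB) ^ 2 / 2

set_option maxHeartbeats 1000000

noncomputable def tA (F₁ A x : ℝ) : ℝ := Real.sqrt (2 * (A - x) / F₁)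
noncomputable def uu (F₁ A x : ℝ) : ℝ := F₁ * tA F₁ A x
noncomputable def ww (F₁ F₂ A B x : ℝ) : ℝ :=
  Real.sqrt ((uu F₁ A x) ^ 2 + 2 * F₂ * (B - A))
noncomputable def sf (F₁ F₂ A B x : ℝ) : ℝ := (-(uu F₁ A x) + ww F₁ F₂ A B x) / F₂
noncomputable def tB (F₁ F₂ A B x : ℝ) : ℝ := tA F₁ A x + sf F₁ F₂ A B x

variable {F₁ F₂ F₃ A B x : ℝ}

lemma tA_nonneg : 0 ≤ tA F₁ A x := Real.sqrt_nonneg _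

lemma uu_nonneg (hF₁ : 0 < F₁) : 0 ≤ uu F₁ A x :=
  mul_nonneg hF₁.le tA_nonneg

lemma uu_sq (hF₁ : 0 < F₁) (hxA : x ≤ A) : (uu F₁ A x) ^ 2 = 2 * F₁ * (A - x) := by
  have h : (0:ℝ) ≤ 2 * (A - x) / F₁ := by apply div_nonneg (by linarith) hF₁.le
  unfold uu tA
  rw [mul_pow, Real.sq_sqrt h]
  field_simp

lemma ww_nonneg : 0 ≤ ww F₁ F₂ A B x := Real.sqrt_nonneg _

lemma ww_sq (hF₁ : 0 < F₁) (hF₂ : 0 < F₂) (hxA : x ≤ A) (hAB : A ≤ B) :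
    (ww F₁ F₂ A B x) ^ 2 = (uu F₁ A x) ^ 2 + 2 * F₂ * (B - A) := by
  have h : (0:ℝ) ≤ (uu F₁ A x) ^ 2 + 2 * F₂ * (B - A) := by
    have := sq_nonneg (uu F₁ A x); nlinarith
  exact Real.sq_sqrt h

lemma uu_le_ww (hF₁ : 0 < F₁) (hF₂ : 0 < F₂) (hxA : x ≤ A) (hAB : A ≤ B) :
    uu F₁ A x ≤ ww F₁ F₂ A B x := by
  have h1 := uu_nonneg (x := x) (A := A) hF₁
  have h2 := ww_nonneg (F₁ := F₁) (F₂ := F₂) (A := A) (B := B) (x := x)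
  nlinarith [ww_sq (x := x) hF₁ hF₂ hxA hAB]

lemma sf_nonneg (hF₁ : 0 < F₁) (hF₂ : 0 < F₂) (hxA : x ≤ A) (hAB : A ≤ B) :
    0 ≤ sf F₁ F₂ A B x := by
  unfold sf
  have := uu_le_ww (F₂ := F₂) (B := B) hF₁ hF₂ hxA hAB
  apply div_nonneg (by linarith) hF₂.le

lemma tA_eq (hF₁ : 0 < F₁) : tA F₁ A x = uu F₁ A x / F₁ := by
  unfold uu; field_simp

lemma sf_eq (hF₂ : 0 < F₂) : F₂ * sf F₁ F₂ A B x = ww F₁ F₂ A B x - uu F₁ A x := by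
  unfold sf; field_simp; ring

lemma tB_nonneg (hF₁ : 0 < F₁) (hF₂ : 0 < F₂) (hxA : x ≤ A) (hAB : A ≤ B) :
    0 ≤ tB F₁ F₂ A B x :=
  add_nonneg tA_nonneg (sf_nonneg hF₁ hF₂ hxA hAB)

lemma tA_le_tB (hF₁ : 0 < F₁) (hF₂ : 0 < F₂) (hxA : x ≤ A) (hAB : A ≤ B) :
    tA F₁ A x ≤ tB F₁ F₂ A B x := by
  unfold tB; have := sf_nonneg hF₁ hF₂ hxA hAB (F₂ := F₂) (B := B); linarith

lemma phase1_end (hF₁ : 0 < F₁) (hxA : x ≤ A) :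
    x + F₁ * (tA F₁ A x) ^ 2 / 2 = A := by
  have h : (0:ℝ) ≤ 2 * (A - x) / F₁ := div_nonneg (by linarith) hF₁.le
  unfold tA; rw [Real.sq_sqrt h]; field_simp; ring

lemma phase2_end (hF₁ : 0 < F₁) (hF₂ : 0 < F₂) (hxA : x ≤ A) (hAB : A ≤ B) :
    A + uu F₁ A x * sf F₁ F₂ A B x + F₂ * (sf F₁ F₂ A B x) ^ 2 / 2 = B := by
  have h1 := sf_eq (F₁ := F₁) (A := A) (B := B) (x := x) hF₂
  have h2 := ww_sq (x := x) hF₁ hF₂ hxA hAB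
  have hF₂' : F₂ ≠ 0 := hF₂.ne'
  have : F₂ * (uu F₁ A x * sf F₁ F₂ A B x + F₂ * (sf F₁ F₂ A B x) ^ 2 / 2) = F₂ * (B - A) := by
    linear_combination (uu F₁ A x + F₂ * sf F₁ F₂ A B x / 2 + (ww F₁ F₂ A B x - uu F₁ A x)/2) * h1 + (1/2) * h2
  have := mul_left_cancel₀ hF₂' this
  linarith

lemma traj_eq (F₁ F₂ F₃ A B x t : ℝ) (hF₂ : F₂ ≠ 0) :
    twoStepTraj F₁ F₂ F₃ A B x t =
    if t ≤ tA F₁ A x then x + F₁ * t ^ 2 / 2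
    else if t ≤ tB F₁ F₂ A B x then
      A + uu F₁ A x * (t - tA F₁ A x) + F₂ * (t - tA F₁ A x) ^ 2 / 2
    else B + ww F₁ F₂ A B x * (t - tB F₁ F₂ A B x) + F₃ * (t - tB F₁ F₂ A B x) ^ 2 / 2 := by
  have h : uu F₁ A x + F₂ * sf F₁ F₂ A B x = ww F₁ F₂ A B x := by
    unfold sf; field_simp; ring
  simp only [twoStepTraj, tA, uu, ww, sf, tB] at *
  rw [h]
  rfl

lemma traj_strictMono (hF₁ : 0 < F₁) (hF₂ : 0 < F₂) (hF₃ : 0 < F₃)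
    (hxA : x ≤ A) (hAB : A ≤ B) :
    StrictMonoOn (twoStepTraj F₁ F₂ F₃ A B x) (Ici 0) := by
  intro a ha b hb hab
  simp only [mem_Ici] at ha hb
  rw [traj_eq _ _ _ _ _ _ _ hF₂.ne', traj_eq _ _ _ _ _ _ _ hF₂.ne']
  set TA := tA F₁ A x with hTA
  set TB := tB F₁ F₂ A B x with hTB
  set u := uu F₁ A x with hu
  set w := ww F₁ F₂ A B x with hw
  set s := sf F₁ F₂ A B x with hs
  have hTA0 : 0 ≤ TA := tA_nonneg
  have hu0 : 0 ≤ u := uu_nonneg hF₁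
  have hw0 : 0 ≤ w := ww_nonneg
  have hs0 : 0 ≤ s := sf_nonneg hF₁ hF₂ hxA hAB
  have hTBs : TB = TA + s := rfl
  have hp1 : x + F₁ * TA ^ 2 / 2 = A := phase1_end hF₁ hxA
  have hp2 : A + u * s + F₂ * s ^ 2 / 2 = B := phase2_end hF₁ hF₂ hxA hAB
  clear_value TA TB u w s
  by_cases hbA : b ≤ TA
  · have haA : a ≤ TA := hab.le.trans hbA
    rw [if_pos haA, if_pos hbA]
    nlinarith [mul_pos (sub_pos.mpr hab) (show (0:ℝ) < b + a by linarith), hF₁]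
  · rw [if_neg hbA]
    push_neg at hbA
    by_cases hbB : b ≤ TB
    · rw [if_pos hbB]
      have e2 : A < A + u * (b - TA) + F₂ * (b - TA) ^ 2 / 2 := by
        nlinarith [mul_nonneg hu0 (sub_pos.mpr hbA).le,
          mul_pos hF₂ (mul_pos (sub_pos.mpr hbA) (sub_pos.mpr hbA))]
      by_cases haA : a ≤ TA
      · rw [if_pos haA]
        have e1 : x + F₁ * a ^ 2 / 2 ≤ A := by
          nlinarith [mul_nonneg (mul_nonneg hF₁.le (sub_nonneg.mpr haA))
            (by linarith : (0:ℝ) ≤ TA + a)]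
        linarith
      · push_neg at haA
        have haB : a ≤ TB := hab.le.trans hbB
        rw [if_neg (not_le.mpr haA), if_pos haB]
        nlinarith [mul_nonneg hu0 (sub_pos.mpr hab).le,
          mul_pos hF₂ (mul_pos (sub_pos.mpr hab)
            (by linarith : (0:ℝ) < b - TA + (a - TA)))]
    · rw [if_neg hbB]
      push_neg at hbB
      have hbB' : 0 < b - TB := sub_pos.mpr hbB
      have e2 : B < B + w * (b - TB) + F₃ * (b - TB) ^ 2 / 2 := by
        nlinarith [mul_nonneg hw0 hbB'.le, mul_pos hF₃ (mul_pos hbB' hbB')]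
      by_cases haA : a ≤ TA
      · rw [if_pos haA]
        have e1 : x + F₁ * a ^ 2 / 2 ≤ A := by
          nlinarith [mul_nonneg (mul_nonneg hF₁.le (sub_nonneg.mpr haA))
            (by linarith : (0:ℝ) ≤ TA + a)]
        linarith
      · push_neg at haA
        by_cases haB : a ≤ TB
        · rw [if_neg (not_le.mpr haA), if_pos haB]
          have haTB : a - TA ≤ s := by rw [hTBs] at haB; linarith
          have e1 : A + u * (a - TA) + F₂ * (a - TA) ^ 2 / 2 ≤ B := by
            nlinarith [mul_nonneg hu0 (by linarith : (0:ℝ) ≤ s - (a - TA)),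
              mul_nonneg (mul_nonneg hF₂.le (by linarith : (0:ℝ) ≤ s - (a - TA)))
                (by linarith : (0:ℝ) ≤ s + (a - TA))]
          linarith
        · push_neg at haB
          rw [if_neg (not_le.mpr haA), if_neg (not_le.mpr haB)]
          nlinarith [mul_nonneg hw0 (sub_pos.mpr hab).le,
            mul_pos hF₃ (mul_pos (sub_pos.mpr hab)
              (by linarith : (0:ℝ) < b - TB + (a - TB)))]

lemma traj_zero : twoStepTraj F₁ F₂ F₃ A B x 0 = x := by
  have h0 : (0:ℝ) ≤ Real.sqrt (2 * (A - x) / F₁) := Real.sqrt_nonneg _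
  simp only [twoStepTraj, if_pos h0]
  norm_num

lemma traj_ge (hF₁ : 0 < F₁) (hF₂ : 0 < F₂) (hF₃ : 0 < F₃)
    (hxA : x ≤ A) (hAB : A ≤ B) {t : ℝ} (ht : 0 ≤ t) :
    x ≤ twoStepTraj F₁ F₂ F₃ A B x t := by
  rcases eq_or_lt_of_le ht with h | h
  · rw [← h, traj_zero]
  · have := traj_strictMono hF₁ hF₂ hF₃ hxA hAB (self_mem_Ici) (mem_Ici.mpr ht) h
    rw [traj_zero] at this
    exact this.le

noncomputable def tau (F₁ F₂ F₃ A B x y : ℝ) : ℝ :=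
  if y ≤ A then Real.sqrt (2 * (y - x) / F₁)
  else if y ≤ B then
    tA F₁ A x + (-(uu F₁ A x) + Real.sqrt ((uu F₁ A x) ^ 2 + 2 * F₂ * (y - A))) / F₂
  else
    tB F₁ F₂ A B x + (-(ww F₁ F₂ A B x) + Real.sqrt ((ww F₁ F₂ A B x) ^ 2 + 2 * F₃ * (y - B))) / F₃

lemma quad_root {F u c : ℝ} (hF : F ≠ 0) (harg : 0 ≤ u ^ 2 + 2 * F * c) :
    u * ((-u + Real.sqrt (u ^ 2 + 2 * F * c)) / F)
      + F * ((-u + Real.sqrt (u ^ 2 + 2 * F * c)) / F) ^ 2 / 2 = c := by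
  set r := Real.sqrt (u ^ 2 + 2 * F * c) with hrdef
  have hr : r ^ 2 = u ^ 2 + 2 * F * c := Real.sq_sqrt harg
  have hσ : F * ((-u + r) / F) = r - u := by field_simp; ring
  set σ := (-u + r) / F with hσdef
  have key : F * (u * σ + F * σ ^ 2 / 2) = F * c := by
    linear_combination (u + F * σ / 2 + (r - u) / 2) * hσ + (1 / 2) * hr
  have := mul_left_cancel₀ hF key
  linarith

lemma traj_tau (hF₁ : 0 < F₁) (hF₂ : 0 < F₂) (hF₃ : 0 < F₃)
    (hxA : x ≤ A) (hAB : A ≤ B) {y : ℝ} (hxy : x ≤ y) :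
    twoStepTraj F₁ F₂ F₃ A B x (tau F₁ F₂ F₃ A B x y) = y := by
  rw [traj_eq _ _ _ _ _ _ _ hF₂.ne']
  unfold tau
  by_cases h1 : y ≤ A
  · rw [if_pos h1]
    have harg : (0:ℝ) ≤ 2 * (y - x) / F₁ := div_nonneg (by linarith) hF₁.le
    have hle : Real.sqrt (2 * (y - x) / F₁) ≤ tA F₁ A x := by
      unfold tA
      exact Real.sqrt_le_sqrt ((div_le_div_iff_of_pos_right hF₁).mpr (by linarith))
    rw [if_pos hle, Real.sq_sqrt harg]
    field_simp
    ring
  · push_neg at h1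
    rw [if_neg (not_le.mpr h1)]
    set u := uu F₁ A x with hu
    set w := ww F₁ F₂ A B x with hw
    have hu0 : 0 ≤ u := uu_nonneg hF₁
    have hw0 : 0 ≤ w := ww_nonneg
    have hwsq : w ^ 2 = u ^ 2 + 2 * F₂ * (B - A) := ww_sq hF₁ hF₂ hxA hAB
    by_cases h2 : y ≤ B
    · rw [if_pos h2]
      have harg : (0:ℝ) ≤ u ^ 2 + 2 * F₂ * (y - A) := by nlinarith [sq_nonneg u]
      set r := Real.sqrt (u ^ 2 + 2 * F₂ * (y - A)) with hr
      have hr0 : 0 ≤ r := Real.sqrt_nonneg _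
      have hrsq : r ^ 2 = u ^ 2 + 2 * F₂ * (y - A) := Real.sq_sqrt harg
      have hur : u < r := by nlinarith
      have hσpos : 0 < (-u + r) / F₂ := div_pos (by linarith) hF₂
      have hnotTA : ¬ (tA F₁ A x + (-u + r) / F₂ ≤ tA F₁ A x) := by
        push_neg; linarith
      rw [if_neg hnotTA]
      have hrw : r ≤ w := by nlinarith
      have hσle : tA F₁ A x + (-u + r) / F₂ ≤ tB F₁ F₂ A B x := by
        unfold tB sf
        rw [← hu, ← hw]
        have : (-u + r) / F₂ ≤ (-u + w) / F₂ :=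
          (div_le_div_iff_of_pos_right hF₂).mpr (by linarith)
        linarith
      rw [if_pos hσle]
      have := quad_root (u := u) (c := y - A) hF₂.ne' harg
      rw [← hr] at this
      have heq : tA F₁ A x + (-u + r) / F₂ - tA F₁ A x = (-u + r) / F₂ := by ring
      rw [heq]
      linarith
    · push_neg at h2
      rw [if_neg (not_le.mpr h2)]
      have harg : (0:ℝ) ≤ w ^ 2 + 2 * F₃ * (y - B) := by nlinarith [sq_nonneg w]
      set S := Real.sqrt (w ^ 2 + 2 * F₃ * (y - B)) with hS
      have hS0 : 0 ≤ S := Real.sqrt_nonneg _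
      have hSsq : S ^ 2 = w ^ 2 + 2 * F₃ * (y - B) := Real.sq_sqrt harg
      have hwS : w < S := by nlinarith
      have hρpos : 0 < (-w + S) / F₃ := div_pos (by linarith) hF₃
      have hTAB : tA F₁ A x ≤ tB F₁ F₂ A B x := tA_le_tB hF₁ hF₂ hxA hAB
      have hnotTA : ¬ (tB F₁ F₂ A B x + (-w + S) / F₃ ≤ tA F₁ A x) := by
        push_neg; linarith
      have hnotTB : ¬ (tB F₁ F₂ A B x + (-w + S) / F₃ ≤ tB F₁ F₂ A B x) := by
        push_neg; linarith
      rw [if_neg hnotTA, if_neg hnotTB]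
      have := quad_root (u := w) (c := y - B) hF₃.ne' harg
      rw [← hS] at this
      have heq : tB F₁ F₂ A B x + (-w + S) / F₃ - tB F₁ F₂ A B x = (-w + S) / F₃ := by ring
      rw [heq]
      linarith

lemma tau_nonneg (hF₁ : 0 < F₁) (hF₂ : 0 < F₂) (hF₃ : 0 < F₃)
    (hxA : x ≤ A) (hAB : A ≤ B) {y : ℝ} : 0 ≤ tau F₁ F₂ F₃ A B x y := by
  unfold tau
  split_ifs with h1 h2
  · exact Real.sqrt_nonneg _
  · have h3 : uu F₁ A x ≤ Real.sqrt ((uu F₁ A x) ^ 2 + 2 * F₂ * (y - A)) := by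
      have := Real.sqrt_le_sqrt (show (uu F₁ A x) ^ 2 ≤ (uu F₁ A x) ^ 2 + 2 * F₂ * (y - A) by nlinarith)
      rwa [Real.sqrt_sq (uu_nonneg hF₁)] at this
    have := tA_nonneg (F₁ := F₁) (A := A) (x := x)
    have h4 : 0 ≤ (-(uu F₁ A x) + Real.sqrt ((uu F₁ A x) ^ 2 + 2 * F₂ * (y - A))) / F₂ :=
      div_nonneg (by linarith) hF₂.le
    linarith
  · have h3 : ww F₁ F₂ A B x ≤ Real.sqrt ((ww F₁ F₂ A B x) ^ 2 + 2 * F₃ * (y - B)) := by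
      have := Real.sqrt_le_sqrt (show (ww F₁ F₂ A B x) ^ 2 ≤ (ww F₁ F₂ A B x) ^ 2 + 2 * F₃ * (y - B) by nlinarith)
      rwa [Real.sqrt_sq ww_nonneg] at this
    have h4 : 0 ≤ (-(ww F₁ F₂ A B x) + Real.sqrt ((ww F₁ F₂ A B x) ^ 2 + 2 * F₃ * (y - B))) / F₃ :=
      div_nonneg (by linarith) hF₃.le
    have := tB_nonneg (F₁ := F₁) (F₂ := F₂) (A := A) (B := B) (x := x) hF₁ hF₂ hxA hAB
    linarith

lemma key_pointwise (hF₂ : 0 < F₂) (hF₁₂ : F₂ < F₁) (hF₂₃ : F₂ < F₃)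
    (hA : 1 < A) (hAB : A < B)
    (hcond : B - A ≤
      F₁ * (F₃ - F₁) * (F₃ * (F₁ - F₂) + F₁ * (F₃ - F₂)) / ((F₁ - F₂) ^ 2 * F₃ ^ 2) * (A - 1))
    (hx : x ≤ 1) :
    F₃ * (F₁ - F₂) * ww F₁ F₂ A B x ≤ F₁ * (F₃ - F₂) * uu F₁ A x := by
  have hF₁ : 0 < F₁ := hF₂.trans hF₁₂
  have hF₃ : 0 < F₃ := hF₂.trans hF₂₃
  have hxA : x ≤ A := by linarith
  have hu0 : 0 ≤ uu F₁ A x := uu_nonneg hF₁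
  have hw0 : 0 ≤ ww F₁ F₂ A B x := ww_nonneg
  have husq : (uu F₁ A x) ^ 2 = 2 * F₁ * (A - x) := uu_sq hF₁ hxA
  have hwsq : (ww F₁ F₂ A B x) ^ 2 = (uu F₁ A x) ^ 2 + 2 * F₂ * (B - A) :=
    ww_sq hF₁ hF₂ hxA hAB.le
  set u := uu F₁ A x
  set w := ww F₁ F₂ A B x
  clear_value u w
  have hD : (0:ℝ) < (F₁ - F₂) ^ 2 * F₃ ^ 2 := by
    have h12 : 0 < F₁ - F₂ := by linarith
    positivity
  rw [div_mul_eq_mul_div, le_div_iff₀ hD] at hcond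
  have hN : 0 < F₁ * (F₃ - F₁) * (F₃ * (F₁ - F₂) + F₁ * (F₃ - F₂)) := by nlinarith
  have hcond' : (0:ℝ) ≤ F₁ * (F₃ - F₁) * (F₃ * (F₁ - F₂) + F₁ * (F₃ - F₂)) * (A - x)
      - (B - A) * ((F₁ - F₂) ^ 2 * F₃ ^ 2) := by nlinarith
  have hid : (F₁ * (F₃ - F₂) * u) ^ 2 - (F₃ * (F₁ - F₂) * w) ^ 2 =
      2 * F₂ * (F₁ * (F₃ - F₁) * (F₃ * (F₁ - F₂) + F₁ * (F₃ - F₂)) * (A - x)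
        - (B - A) * ((F₁ - F₂) ^ 2 * F₃ ^ 2)) := by
    linear_combination ((F₁ * (F₃ - F₂)) ^ 2 - (F₃ * (F₁ - F₂)) ^ 2) * husq
      - (F₃ * (F₁ - F₂)) ^ 2 * hwsq
  have hsq : (F₃ * (F₁ - F₂) * w) ^ 2 ≤ (F₁ * (F₃ - F₂) * u) ^ 2 := by
    nlinarith [mul_nonneg hF₂.le hcond']
  have h1 : 0 ≤ F₁ * (F₃ - F₂) * u := by
    apply mul_nonneg (mul_nonneg hF₁.le (by linarith)) hu0
  have h2 : 0 ≤ F₃ * (F₁ - F₂) * w := by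
    apply mul_nonneg (mul_nonneg hF₃.le (by linarith)) hw0
  nlinarith [hsq, h1, h2]

lemma key_pointwise_strict (hF₂ : 0 < F₂) (hF₁₂ : F₂ < F₁) (hF₂₃ : F₂ < F₃)
    (hA : 1 < A) (hAB : A < B)
    (hncond : F₁ * (F₃ - F₁) * (F₃ * (F₁ - F₂) + F₁ * (F₃ - F₂)) / ((F₁ - F₂) ^ 2 * F₃ ^ 2) * (A - 1)
      < B - A) :
    F₁ * (F₃ - F₂) * uu F₁ A 1 < F₃ * (F₁ - F₂) * ww F₁ F₂ A B 1 := by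
  have hF₁ : 0 < F₁ := hF₂.trans hF₁₂
  have hF₃ : 0 < F₃ := hF₂.trans hF₂₃
  have hxA : (1:ℝ) ≤ A := hA.le
  have hu0 : 0 ≤ uu F₁ A 1 := uu_nonneg hF₁
  have hw0 : 0 ≤ ww F₁ F₂ A B 1 := ww_nonneg
  have husq : (uu F₁ A 1) ^ 2 = 2 * F₁ * (A - 1) := uu_sq hF₁ hxA
  have hwsq : (ww F₁ F₂ A B 1) ^ 2 = (uu F₁ A 1) ^ 2 + 2 * F₂ * (B - A) :=
    ww_sq hF₁ hF₂ hxA hAB.le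
  set u := uu F₁ A 1
  set w := ww F₁ F₂ A B 1
  clear_value u w
  have hD : (0:ℝ) < (F₁ - F₂) ^ 2 * F₃ ^ 2 := by
    have h12 : 0 < F₁ - F₂ := by linarith
    positivity
  rw [div_mul_eq_mul_div, div_lt_iff₀ hD] at hncond
  have hid : (F₁ * (F₃ - F₂) * u) ^ 2 - (F₃ * (F₁ - F₂) * w) ^ 2 =
      2 * F₂ * (F₁ * (F₃ - F₁) * (F₃ * (F₁ - F₂) + F₁ * (F₃ - F₂)) * (A - 1)
        - (B - A) * ((F₁ - F₂) ^ 2 * F₃ ^ 2)) := by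
    linear_combination ((F₁ * (F₃ - F₂)) ^ 2 - (F₃ * (F₁ - F₂)) ^ 2) * husq
      - (F₃ * (F₁ - F₂)) ^ 2 * hwsq
  have hsq : (F₁ * (F₃ - F₂) * u) ^ 2 < (F₃ * (F₁ - F₂) * w) ^ 2 := by
    nlinarith [mul_pos hF₂ (show (0:ℝ) < (B - A) * ((F₁ - F₂) ^ 2 * F₃ ^ 2)
      - F₁ * (F₃ - F₁) * (F₃ * (F₁ - F₂) + F₁ * (F₃ - F₂)) * (A - 1) by linarith)]
  have h1 : 0 ≤ F₁ * (F₃ - F₂) * u := by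
    apply mul_nonneg (mul_nonneg hF₁.le (by linarith)) hu0
  have h2 : 0 ≤ F₃ * (F₁ - F₂) * w := by
    apply mul_nonneg (mul_nonneg hF₃.le (by linarith)) hw0
  nlinarith [hsq, h1, h2]

lemma pos_of_sq {a c : ℝ} (ha : 0 ≤ a) (hsq : a ^ 2 = c) (hc : 0 < c) : 0 < a := by
  rcases ha.lt_or_eq with h | h
  · exact h
  · exfalso; rw [← h] at hsq; nlinarith

lemma lt_of_sq {a b : ℝ} (hb : 0 ≤ b) (h : a ^ 2 < b ^ 2) : a < b := by
  by_contra h'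
  push_neg at h'
  nlinarith

lemma le_of_sq {a b : ℝ} (ha : 0 ≤ a) (hb : 0 ≤ b) (h : a ^ 2 ≤ b ^ 2) : a ≤ b := by
  by_contra h'
  push_neg at h'
  nlinarith

lemma tau_lt (hF₂ : 0 < F₂) (hF₁₂ : F₂ < F₁) (hF₂₃ : F₂ < F₃)
    (hA : 1 < A) (hAB : A < B)
    (hcond : B - A ≤
      F₁ * (F₃ - F₁) * (F₃ * (F₁ - F₂) + F₁ * (F₃ - F₂)) / ((F₁ - F₂) ^ 2 * F₃ ^ 2) * (A - 1))
    {x₁ x₂ y : ℝ} (hx₂ : x₂ ≤ 1) (h12 : x₁ < x₂) (hy : x₂ ≤ y) :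
    tau F₁ F₂ F₃ A B x₂ y < tau F₁ F₂ F₃ A B x₁ y := by
  have hF₁ : 0 < F₁ := hF₂.trans hF₁₂
  have hF₃ : 0 < F₃ := hF₂.trans hF₂₃
  have hx₁ : x₁ ≤ 1 := by linarith
  have hx₁A : x₁ ≤ A := by linarith
  have hx₂A : x₂ ≤ A := by linarith
  set u₁ := uu F₁ A x₁ with hu₁def
  set u₂ := uu F₁ A x₂ with hu₂def
  set w₁ := ww F₁ F₂ A B x₁ with hw₁def
  set w₂ := ww F₁ F₂ A B x₂ with hw₂def
  have hu₁0 : 0 ≤ u₁ := uu_nonneg hF₁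
  have hu₂0 : 0 ≤ u₂ := uu_nonneg hF₁
  have hw₁0 : 0 ≤ w₁ := ww_nonneg
  have hw₂0 : 0 ≤ w₂ := ww_nonneg
  have hu₁sq : u₁ ^ 2 = 2 * F₁ * (A - x₁) := uu_sq hF₁ hx₁A
  have hu₂sq : u₂ ^ 2 = 2 * F₁ * (A - x₂) := uu_sq hF₁ hx₂A
  have hw₁sq : w₁ ^ 2 = u₁ ^ 2 + 2 * F₂ * (B - A) := ww_sq hF₁ hF₂ hx₁A hAB.le
  have hw₂sq : w₂ ^ 2 = u₂ ^ 2 + 2 * F₂ * (B - A) := ww_sq hF₁ hF₂ hx₂A hAB.le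
  have key₁ : F₃ * (F₁ - F₂) * w₁ ≤ F₁ * (F₃ - F₂) * u₁ :=
    key_pointwise hF₂ hF₁₂ hF₂₃ hA hAB hcond hx₁
  have key₂ : F₃ * (F₁ - F₂) * w₂ ≤ F₁ * (F₃ - F₂) * u₂ :=
    key_pointwise hF₂ hF₁₂ hF₂₃ hA hAB hcond hx₂
  clear hcond
  have hu₂pos : 0 < u₂ :=
    pos_of_sq hu₂0 hu₂sq (by linarith [mul_pos hF₁ (show (0:ℝ) < A - x₂ by linarith)])
  have hu12 : u₂ < u₁ := by
    apply lt_of_sq hu₁0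
    rw [hu₁sq, hu₂sq]
    linarith [mul_pos hF₁ (sub_pos.mpr h12)]
  have hw₂pos : 0 < w₂ :=
    pos_of_sq hw₂0 hw₂sq (by linarith [mul_pos hF₂ (sub_pos.mpr hAB), sq_nonneg u₂])
  have hw12 : w₂ < w₁ := by
    apply lt_of_sq hw₁0
    rw [hw₁sq, hw₂sq]
    linarith [pow_lt_pow_left₀ hu12 hu₂0 two_ne_zero]
  have e2a : (F₁ - F₂) * w₁ < F₁ * u₁ := by
    have h' : F₃ * ((F₁ - F₂) * w₁) < F₃ * (F₁ * u₁) := by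
      have h'' := mul_pos (mul_pos hF₁ hF₂) (hu₂pos.trans hu12)
      linarith [key₁, h'']
    exact (mul_lt_mul_iff_right₀ hF₃).mp h'
  have e2b : (F₁ - F₂) * w₂ < F₁ * u₂ := by
    have h' : F₃ * ((F₁ - F₂) * w₂) < F₃ * (F₁ * u₂) := by
      have h'' := mul_pos (mul_pos hF₁ hF₂) hu₂pos
      linarith [key₂, h'']
    exact (mul_lt_mul_iff_right₀ hF₃).mp h'
  unfold tau
  by_cases h1 : y ≤ A
  · simp only [if_pos h1]
    apply Real.sqrt_lt_sqrt (div_nonneg (by linarith) hF₁.le)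
    apply (div_lt_div_iff_of_pos_right hF₁).mpr
    linarith
  · simp only [if_neg h1]
    push_neg at h1
    by_cases h2 : y ≤ B
    · simp only [if_pos h2]
      rw [tA_eq hF₁, tA_eq hF₁, ← hu₁def, ← hu₂def]
      have harg₁ : (0:ℝ) ≤ u₁ ^ 2 + 2 * F₂ * (y - A) := by
        linarith [sq_nonneg u₁, mul_pos hF₂ (sub_pos.mpr h1)]
      have harg₂ : (0:ℝ) ≤ u₂ ^ 2 + 2 * F₂ * (y - A) := by
        linarith [sq_nonneg u₂, mul_pos hF₂ (sub_pos.mpr h1)]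
      set r₁ := Real.sqrt (u₁ ^ 2 + 2 * F₂ * (y - A)) with hr₁def
      set r₂ := Real.sqrt (u₂ ^ 2 + 2 * F₂ * (y - A)) with hr₂def
      have hr₁0 : 0 ≤ r₁ := Real.sqrt_nonneg _
      have hr₂0 : 0 ≤ r₂ := Real.sqrt_nonneg _
      have hr₁sq : r₁ ^ 2 = u₁ ^ 2 + 2 * F₂ * (y - A) := Real.sq_sqrt harg₁
      have hr₂sq : r₂ ^ 2 = u₂ ^ 2 + 2 * F₂ * (y - A) := Real.sq_sqrt harg₂
      have hr₂pos : 0 < r₂ :=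
        pos_of_sq hr₂0 hr₂sq (by linarith [mul_pos hF₂ (sub_pos.mpr h1), sq_nonneg u₂])
      have hr12 : r₂ < r₁ := by
        apply lt_of_sq hr₁0
        rw [hr₁sq, hr₂sq]
        linarith [pow_lt_pow_left₀ hu12 hu₂0 two_ne_zero]
      have hr₁w : r₁ ≤ w₁ := by
        apply le_of_sq hr₁0 hw₁0
        rw [hr₁sq, hw₁sq]
        linarith [mul_le_mul_of_nonneg_left (show y - A ≤ B - A by linarith)
          (by positivity : (0:ℝ) ≤ 2 * F₂)]
      have hr₂w : r₂ ≤ w₂ := by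
        apply le_of_sq hr₂0 hw₂0
        rw [hr₂sq, hw₂sq]
        linarith [mul_le_mul_of_nonneg_left (show y - A ≤ B - A by linarith)
          (by positivity : (0:ℝ) ≤ 2 * F₂)]
      have comb : ∀ p q : ℝ, p / F₁ + q / F₂ = (F₂ * p + F₁ * q) / (F₁ * F₂) := by
        intro p q; field_simp
      rw [comb, comb]
      apply (div_lt_div_iff_of_pos_right (by positivity)).mpr
      have p1 : ((F₁ - F₂) * (w₁ + w₂)) * (u₁ - u₂) < (F₁ * (u₁ + u₂)) * (u₁ - u₂) :=
        mul_lt_mul_of_pos_right (by linarith) (sub_pos.mpr hu12)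
      have p2 : ((F₁ - F₂) * (u₁ - u₂)) * (r₁ + r₂) ≤ ((F₁ - F₂) * (u₁ - u₂)) * (w₁ + w₂) :=
        mul_le_mul_of_nonneg_left (by linarith)
          (mul_nonneg (by linarith) (by linarith))
      have e1 : (r₁ - r₂) * (r₁ + r₂) = (u₁ - u₂) * (u₁ + u₂) := by
        linear_combination hr₁sq - hr₂sq
      have e1' : F₁ * ((r₁ - r₂) * (r₁ + r₂)) = F₁ * ((u₁ - u₂) * (u₁ + u₂)) := by rw [e1]
      have c1 : ((F₁ - F₂) * (u₁ - u₂)) * (r₁ + r₂) < (F₁ * (r₁ - r₂)) * (r₁ + r₂) := by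
        linarith [p1, p2, e1']
      have c2 : (F₁ - F₂) * (u₁ - u₂) < F₁ * (r₁ - r₂) :=
        (mul_lt_mul_iff_left₀ (show (0:ℝ) < r₁ + r₂ by linarith)).mp c1
      linarith [c2]
    · simp only [if_neg h2]
      push_neg at h2
      have hTB₁ : tB F₁ F₂ A B x₁ = u₁ / F₁ + (-u₁ + w₁) / F₂ := by
        unfold tB sf; rw [tA_eq hF₁]
      have hTB₂ : tB F₁ F₂ A B x₂ = u₂ / F₁ + (-u₂ + w₂) / F₂ := by
        unfold tB sf; rw [tA_eq hF₁]
      rw [hTB₁, hTB₂, ← hw₁def, ← hw₂def]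
      have harg₁ : (0:ℝ) ≤ w₁ ^ 2 + 2 * F₃ * (y - B) := by
        linarith [sq_nonneg w₁, mul_pos hF₃ (sub_pos.mpr h2)]
      have harg₂ : (0:ℝ) ≤ w₂ ^ 2 + 2 * F₃ * (y - B) := by
        linarith [sq_nonneg w₂, mul_pos hF₃ (sub_pos.mpr h2)]
      set S₁ := Real.sqrt (w₁ ^ 2 + 2 * F₃ * (y - B)) with hS₁def
      set S₂ := Real.sqrt (w₂ ^ 2 + 2 * F₃ * (y - B)) with hS₂def
      have hS₁0 : 0 ≤ S₁ := Real.sqrt_nonneg _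
      have hS₂0 : 0 ≤ S₂ := Real.sqrt_nonneg _
      have hS₁sq : S₁ ^ 2 = w₁ ^ 2 + 2 * F₃ * (y - B) := Real.sq_sqrt harg₁
      have hS₂sq : S₂ ^ 2 = w₂ ^ 2 + 2 * F₃ * (y - B) := Real.sq_sqrt harg₂
      have hS12 : S₂ < S₁ := by
        apply lt_of_sq hS₁0
        rw [hS₁sq, hS₂sq]
        linarith [pow_lt_pow_left₀ hw12 hw₂0 two_ne_zero]
      have comb3 : ∀ p q r : ℝ, p / F₁ + q / F₂ + r / F₃
          = (F₂ * F₃ * p + F₁ * F₃ * q + F₁ * F₂ * r) / (F₁ * F₂ * F₃) := by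
        intro p q r; field_simp
      rw [comb3, comb3]
      apply (div_lt_div_iff_of_pos_right (by positivity)).mpr
      have q1 : F₃ * (F₁ - F₂) * (w₁ + w₂) ≤ F₁ * (F₃ - F₂) * (u₁ + u₂) := by linarith
      have q2 : (w₁ - w₂) * (w₁ + w₂) = (u₁ - u₂) * (u₁ + u₂) := by
        linear_combination hw₁sq - hw₂sq
      have p1 : (F₃ * (F₁ - F₂) * (w₁ + w₂)) * (u₁ - u₂) ≤ (F₁ * (F₃ - F₂) * (u₁ + u₂)) * (u₁ - u₂) :=
        mul_le_mul_of_nonneg_right q1 (by linarith)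
      have q2' : (F₁ * (F₃ - F₂)) * ((w₁ - w₂) * (w₁ + w₂)) = (F₁ * (F₃ - F₂)) * ((u₁ - u₂) * (u₁ + u₂)) := by
        rw [q2]
      have c1 : (F₃ * (F₁ - F₂) * (u₁ - u₂)) * (w₁ + w₂) ≤ (F₁ * (F₃ - F₂) * (w₁ - w₂)) * (w₁ + w₂) := by
        linarith [p1, q2']
      have r1 : F₃ * (F₁ - F₂) * (u₁ - u₂) ≤ F₁ * (F₃ - F₂) * (w₁ - w₂) :=
        (mul_le_mul_iff_left₀ (show (0:ℝ) < w₁ + w₂ by linarith)).mp c1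
      linarith [r1, mul_pos (mul_pos hF₁ hF₂) (sub_pos.mpr hS12)]

lemma traj_continuous (hF₁ : 0 < F₁) (hF₂ : 0 < F₂) (hF₃ : 0 < F₃)
    (hxA : x ≤ A) (hAB : A ≤ B) :
    Continuous (fun t => twoStepTraj F₁ F₂ F₃ A B x t) := by
  have hfun : (fun t => twoStepTraj F₁ F₂ F₃ A B x t) = fun t =>
      if t ≤ tA F₁ A x then x + F₁ * t ^ 2 / 2
      else if t ≤ tB F₁ F₂ A B x then
        A + uu F₁ A x * (t - tA F₁ A x) + F₂ * (t - tA F₁ A x) ^ 2 / 2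
      else B + ww F₁ F₂ A B x * (t - tB F₁ F₂ A B x) + F₃ * (t - tB F₁ F₂ A B x) ^ 2 / 2 :=
    funext fun t => traj_eq _ _ _ _ _ _ _ hF₂.ne'
  rw [hfun]
  have hc1 : Continuous fun t : ℝ => x + F₁ * t ^ 2 / 2 := by continuity
  have hc2 : Continuous fun t : ℝ =>
      A + uu F₁ A x * (t - tA F₁ A x) + F₂ * (t - tA F₁ A x) ^ 2 / 2 := by continuity
  have hc3 : Continuous fun t : ℝ =>
      B + ww F₁ F₂ A B x * (t - tB F₁ F₂ A B x) + F₃ * (t - tB F₁ F₂ A B x) ^ 2 / 2 := by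
    continuity
  have hinner : Continuous fun t : ℝ =>
      if t ≤ tB F₁ F₂ A B x then
        A + uu F₁ A x * (t - tA F₁ A x) + F₂ * (t - tA F₁ A x) ^ 2 / 2
      else B + ww F₁ F₂ A B x * (t - tB F₁ F₂ A B x) + F₃ * (t - tB F₁ F₂ A B x) ^ 2 / 2 := by
    apply Continuous.if_le hc2 hc3 continuous_id continuous_const
    intro t ht
    rw [show t = tB F₁ F₂ A B x from ht]
    have h1 : tB F₁ F₂ A B x - tA F₁ A x = sf F₁ F₂ A B x := by unfold tB; ring
    rw [h1]
    simp only [sub_self]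
    simpa using phase2_end hF₁ hF₂ hxA hAB (F₂ := F₂)
  apply Continuous.if_le hc1 hinner continuous_id continuous_const
  intro t ht
  rw [show t = tA F₁ A x from ht, if_pos (tA_le_tB hF₁ hF₂ hxA hAB)]
  simp only [sub_self]
  simpa using phase1_end hF₁ hxA (F₁ := F₁)

lemma no_collision (hF₂ : 0 < F₂) (hF₁₂ : F₂ < F₁) (hF₂₃ : F₂ < F₃)
    (hA : 1 < A) (hAB : A < B)
    (hcond : B - A ≤
      F₁ * (F₃ - F₁) * (F₃ * (F₁ - F₂) + F₁ * (F₃ - F₂)) / ((F₁ - F₂) ^ 2 * F₃ ^ 2) * (A - 1))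
    {t x₁ x₂ : ℝ} (ht : 0 ≤ t) (hx2 : x₂ ≤ 1) (h12 : x₁ < x₂) :
    twoStepTraj F₁ F₂ F₃ A B x₁ t ≠ twoStepTraj F₁ F₂ F₃ A B x₂ t := by
  intro heq
  have hF₁ : 0 < F₁ := hF₂.trans hF₁₂
  have hF₃ : 0 < F₃ := hF₂.trans hF₂₃
  have hx₂A : x₂ ≤ A := by linarith
  have hx₁A : x₁ ≤ A := by linarith
  set Y := twoStepTraj F₁ F₂ F₃ A B x₂ t with hYdef
  have hYx₂ : x₂ ≤ Y := traj_ge hF₁ hF₂ hF₃ hx₂A hAB.le ht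
  have hYx₁ : x₁ ≤ Y := by linarith
  have ht₂ : t = tau F₁ F₂ F₃ A B x₂ Y := by
    apply (traj_strictMono hF₁ hF₂ hF₃ hx₂A hAB.le).injOn (mem_Ici.mpr ht)
      (mem_Ici.mpr (tau_nonneg hF₁ hF₂ hF₃ hx₂A hAB.le))
    rw [traj_tau hF₁ hF₂ hF₃ hx₂A hAB.le hYx₂]
  have ht₁ : t = tau F₁ F₂ F₃ A B x₁ Y := by
    apply (traj_strictMono hF₁ hF₂ hF₃ hx₁A hAB.le).injOn (mem_Ici.mpr ht)
      (mem_Ici.mpr (tau_nonneg hF₁ hF₂ hF₃ hx₁A hAB.le))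
    rw [traj_tau hF₁ hF₂ hF₃ hx₁A hAB.le hYx₁, ← heq]
  have hlt := tau_lt hF₂ hF₁₂ hF₂₃ hA hAB hcond hx2 h12 hYx₂
  rw [← ht₁, ← ht₂] at hlt
  exact lt_irrefl t hlt

lemma traj_late (hF₂ : F₂ ≠ 0) {t : ℝ} (hA : tA F₁ A x ≤ tB F₁ F₂ A B x)
    (ht : tB F₁ F₂ A B x < t) :
    twoStepTraj F₁ F₂ F₃ A B x t
      = B + ww F₁ F₂ A B x * (t - tB F₁ F₂ A B x) + F₃ * (t - tB F₁ F₂ A B x) ^ 2 / 2 := by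
  rw [traj_eq _ _ _ _ _ _ _ hF₂, if_neg (not_le.mpr (lt_of_le_of_lt hA ht)),
    if_neg (not_le.mpr ht)]

lemma collision_exists (hF₂ : 0 < F₂) (hF₁₂ : F₂ < F₁) (hF₂₃ : F₂ < F₃)
    (hA : 1 < A) (hAB : A < B)
    (hncond : F₁ * (F₃ - F₁) * (F₃ * (F₁ - F₂) + F₁ * (F₃ - F₂)) / ((F₁ - F₂) ^ 2 * F₃ ^ 2) * (A - 1)
      < B - A) :
    ∃ t, 0 ≤ t ∧ ∃ x₁, x₁ ∈ Icc (0:ℝ) 1 ∧ x₁ ≠ 1 ∧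
      twoStepTraj F₁ F₂ F₃ A B x₁ t = twoStepTraj F₁ F₂ F₃ A B 1 t := by
  have hF₁ : 0 < F₁ := hF₂.trans hF₁₂
  have hF₃ : 0 < F₃ := hF₂.trans hF₂₃
  have hP : (0:ℝ) < F₁ * (F₃ - F₂) := mul_pos hF₁ (by linarith)
  have hQ : (0:ℝ) < F₃ * (F₁ - F₂) := mul_pos hF₃ (by linarith)
  set P := F₁ * (F₃ - F₂) with hPdef
  set Q := F₃ * (F₁ - F₂) with hQdef
  set u₀ := uu F₁ A 1 with hu₀def
  set w₀ := ww F₁ F₂ A B 1 with hw₀def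
  have hu₀0 : 0 ≤ u₀ := uu_nonneg hF₁
  have hw₀0 : 0 ≤ w₀ := ww_nonneg
  have hu₀sq : u₀ ^ 2 = 2 * F₁ * (A - 1) := uu_sq hF₁ hA.le
  have hw₀sq : w₀ ^ 2 = u₀ ^ 2 + 2 * F₂ * (B - A) := ww_sq hF₁ hF₂ hA.le hAB.le
  have hu₀pos : 0 < u₀ :=
    pos_of_sq hu₀0 hu₀sq (by linarith [mul_pos hF₁ (show (0:ℝ) < A - 1 by linarith)])
  have hw₀pos : 0 < w₀ :=
    pos_of_sq hw₀0 hw₀sq (by linarith [mul_pos hF₂ (sub_pos.mpr hAB), sq_nonneg u₀])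
  have hstrict : P * u₀ < Q * w₀ := key_pointwise_strict hF₂ hF₁₂ hF₂₃ hA hAB hncond
  set ε₀ := Q * w₀ - P * u₀ with hε₀def
  have hε₀ : 0 < ε₀ := by simp only [hε₀def]; linarith
  set δ := min 1 (ε₀ ^ 2 / (P ^ 2 * F₁ + 1)) with hδdef
  have hδpos : 0 < δ := lt_min one_pos (by positivity)
  have hδ1 : δ ≤ 1 := min_le_left _ _
  have hδ2 : δ * (P ^ 2 * F₁ + 1) ≤ ε₀ ^ 2 := by
    have := min_le_right (1:ℝ) (ε₀ ^ 2 / (P ^ 2 * F₁ + 1))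
    rw [← hδdef] at this
    calc δ * (P ^ 2 * F₁ + 1) ≤ ε₀ ^ 2 / (P ^ 2 * F₁ + 1) * (P ^ 2 * F₁ + 1) := by
          apply mul_le_mul_of_nonneg_right this (by positivity)
      _ = ε₀ ^ 2 := by field_simp
  set x₁ := 1 - δ with hx₁def
  have hx₁0 : 0 ≤ x₁ := by simp only [hx₁def]; linarith
  have hx₁1 : x₁ < 1 := by simp only [hx₁def]; linarith
  have hx₁A : x₁ ≤ A := by simp only [hx₁def]; linarith
  set u₁ := uu F₁ A x₁ with hu₁def
  set w₁ := ww F₁ F₂ A B x₁ with hw₁def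
  have hu₁0 : 0 ≤ u₁ := uu_nonneg hF₁
  have hw₁0 : 0 ≤ w₁ := ww_nonneg
  have hu₁sq : u₁ ^ 2 = 2 * F₁ * (A - x₁) := uu_sq hF₁ hx₁A
  have hw₁sq : w₁ ^ 2 = u₁ ^ 2 + 2 * F₂ * (B - A) := ww_sq hF₁ hF₂ hx₁A hAB.le
  have hu₁sq' : u₁ ^ 2 = u₀ ^ 2 + 2 * F₁ * δ := by
    rw [hu₁sq, hu₀sq, hx₁def]; ring
  have hw₁sq' : w₁ ^ 2 = w₀ ^ 2 + 2 * F₁ * δ := by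
    rw [hw₁sq, hw₀sq, hu₁sq']; ring
  have hdelta2 : (0:ℝ) < 2 * F₁ * δ := by positivity
  have hu₁u₀ : u₀ ≤ u₁ := le_of_sq hu₀0 hu₁0 (by linarith)
  have hw₁w₀ : w₀ ≤ w₁ := le_of_sq hw₀0 hw₁0 (by linarith)
  set z := Real.sqrt (2 * F₁ * δ) with hzdef
  have hz0 : 0 ≤ z := Real.sqrt_nonneg _
  have hzsq : z ^ 2 = 2 * F₁ * δ := Real.sq_sqrt hdelta2.le
  have hu₁le : u₁ ≤ u₀ + z := by
    apply le_of_sq hu₁0 (by linarith)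
    have h0 : 0 ≤ u₀ * z := mul_nonneg hu₀0 hz0
    have expand : (u₀ + z) ^ 2 = u₀ ^ 2 + 2 * (u₀ * z) + z ^ 2 := by ring
    linarith [hu₁sq', hzsq, expand]
  have hPz : P * z < 2 * ε₀ := by
    apply lt_of_sq (by linarith)
    have h1 : (P * z) ^ 2 = P ^ 2 * (2 * F₁ * δ) := by rw [mul_pow, hzsq]
    have h2 : (2 * ε₀) ^ 2 = 4 * ε₀ ^ 2 := by ring
    linarith [h1, h2, hδ2, hδpos, sq_nonneg ε₀]
  have hgt : P * (u₁ + u₀) < Q * (w₁ + w₀) := by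
    have m1 : P * u₁ ≤ P * (u₀ + z) := mul_le_mul_of_nonneg_left hu₁le hP.le
    have m2 : Q * w₀ ≤ Q * w₁ := mul_le_mul_of_nonneg_left hw₁w₀ hQ.le
    have hε₀eq : ε₀ = Q * w₀ - P * u₀ := hε₀def
    linarith [m1, m2, hPz, hε₀eq]
  have e_u : (u₁ - u₀) * (u₁ + u₀) = 2 * F₁ * δ := by linear_combination hu₁sq'
  have e_w : (w₁ - w₀) * (w₁ + w₀) = 2 * F₁ * δ := by linear_combination hw₁sq'
  have e_w' : (P * (u₁ + u₀)) * ((w₁ - w₀) * (w₁ + w₀)) = (P * (u₁ + u₀)) * (2 * F₁ * δ) := by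
    rw [e_w]
  have e_u' : (Q * (w₁ + w₀)) * ((u₁ - u₀) * (u₁ + u₀)) = (Q * (w₁ + w₀)) * (2 * F₁ * δ) := by
    rw [e_u]
  have h1 := mul_lt_mul_of_pos_right hgt hdelta2
  have c1 : (P * (w₁ - w₀)) * ((u₁ + u₀) * (w₁ + w₀)) < (Q * (u₁ - u₀)) * ((u₁ + u₀) * (w₁ + w₀)) := by
    linarith [h1, e_w', e_u']
  have hkey : P * (w₁ - w₀) < Q * (u₁ - u₀) :=
    (mul_lt_mul_iff_left₀ (mul_pos (show (0:ℝ) < u₁ + u₀ by linarith)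
      (show (0:ℝ) < w₁ + w₀ by linarith))).mp c1
  -- slope computation
  set T₀ := tB F₁ F₂ A B 1 with hT₀def
  set T₁ := tB F₁ F₂ A B x₁ with hT₁def
  have hT₀eq : T₀ = u₀ / F₁ + (-u₀ + w₀) / F₂ := by
    simp only [hT₀def]; unfold tB sf; rw [tA_eq hF₁]
  have hT₁eq : T₁ = u₁ / F₁ + (-u₁ + w₁) / F₂ := by
    simp only [hT₁def]; unfold tB sf; rw [tA_eq hF₁]
  have hT₀0 : 0 ≤ T₀ := tB_nonneg hF₁ hF₂ hA.le hAB.le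
  have hT₁0 : 0 ≤ T₁ := tB_nonneg hF₁ hF₂ hx₁A hAB.le
  set slope := (w₀ - F₃ * T₀) - (w₁ - F₃ * T₁) with hslopedef
  have hslope : F₁ * F₂ * slope = (Q * u₀ - P * w₀) - (Q * u₁ - P * w₁) := by
    simp only [hslopedef, hT₀eq, hT₁eq, hPdef, hQdef]
    field_simp
    ring
  have hslope_neg : slope < 0 := by
    by_contra h'
    push_neg at h'
    have := mul_nonneg (mul_pos hF₁ hF₂).le h'
    linarith [hkey, hslope]
  set K := (-(w₀ * T₀) + F₃ * T₀ ^ 2 / 2) - (-(w₁ * T₁) + F₃ * T₁ ^ 2 / 2) with hKdef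
  set T := 1 + max (max T₀ T₁) ((|K| + 1) / (-slope)) with hTdef
  have hTT₀ : T₀ < T := by
    have := le_max_left T₀ T₁
    have := le_max_left (max T₀ T₁) ((|K| + 1) / (-slope))
    simp only [hTdef]; linarith
  have hTT₁ : T₁ < T := by
    have := le_max_right T₀ T₁
    have := le_max_left (max T₀ T₁) ((|K| + 1) / (-slope))
    simp only [hTdef]; linarith
  have hT0 : 0 ≤ T := by linarith
  have hγT : |K| + 1 ≤ (-slope) * T := by
    have h2 : (|K| + 1) / (-slope) ≤ T := by
      have := le_max_right (max T₀ T₁) ((|K| + 1) / (-slope))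
      simp only [hTdef]; linarith
    calc |K| + 1 = (|K| + 1) / (-slope) * (-slope) :=
          (div_mul_cancel₀ (|K| + 1) (show -slope ≠ 0 by linarith)).symm
      _ ≤ T * (-slope) := mul_le_mul_of_nonneg_right h2 (by linarith)
      _ = (-slope) * T := by ring
  have htraj₀ : twoStepTraj F₁ F₂ F₃ A B 1 T = B + w₀ * (T - T₀) + F₃ * (T - T₀) ^ 2 / 2 :=
    traj_late hF₂.ne' (tA_le_tB hF₁ hF₂ hA.le hAB.le) hTT₀
  have htraj₁ : twoStepTraj F₁ F₂ F₃ A B x₁ T = B + w₁ * (T - T₁) + F₃ * (T - T₁) ^ 2 / 2 :=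
    traj_late hF₂.ne' (tA_le_tB hF₁ hF₂ hx₁A hAB.le) hTT₁
  have hDT : twoStepTraj F₁ F₂ F₃ A B 1 T - twoStepTraj F₁ F₂ F₃ A B x₁ T ≤ -1 := by
    rw [htraj₀, htraj₁]
    have hring : (B + w₀ * (T - T₀) + F₃ * (T - T₀) ^ 2 / 2)
        - (B + w₁ * (T - T₁) + F₃ * (T - T₁) ^ 2 / 2) = slope * T + K := by
      simp only [hslopedef, hKdef]; ring
    rw [hring]
    have := le_abs_self K
    linarith [hγT]
  -- IVT
  have hcont : Continuous (fun t => twoStepTraj F₁ F₂ F₃ A B 1 t - twoStepTraj F₁ F₂ F₃ A B x₁ t) :=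
    (traj_continuous hF₁ hF₂ hF₃ hA.le hAB.le).sub (traj_continuous hF₁ hF₂ hF₃ hx₁A hAB.le)
  have hf0 : (fun t => twoStepTraj F₁ F₂ F₃ A B 1 t - twoStepTraj F₁ F₂ F₃ A B x₁ t) 0 = δ := by
    simp only [traj_zero]
    simp [hx₁def]
  have hmem : (0:ℝ) ∈ Icc ((fun t => twoStepTraj F₁ F₂ F₃ A B 1 t - twoStepTraj F₁ F₂ F₃ A B x₁ t) T)
      ((fun t => twoStepTraj F₁ F₂ F₃ A B 1 t - twoStepTraj F₁ F₂ F₃ A B x₁ t) 0) := by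
    simp only [hf0]
    exact ⟨by simpa using hDT.trans (show (-1:ℝ) ≤ 0 by norm_num), hδpos.le⟩
  obtain ⟨t₀, ht₀mem, ht₀⟩ := intermediate_value_Icc' hT0 hcont.continuousOn hmem
  refine ⟨t₀, ht₀mem.1, x₁, ⟨hx₁0, hx₁1.le⟩, ne_of_lt hx₁1, ?_⟩
  simp only at ht₀
  linarith [ht₀]

/-- Two gaps, particles starting at rest: for `0 < F₂ < F₁`, `F₂ < F₃`
and `1 < A < B`, there are no collisions on `[0,∞)` iff `B − A ≤ α(A − 1)` with
`α = F₁(F₃ − F₁)(F₃(F₁ − F₂) + F₁(F₃ − F₂)) / ((F₁ − F₂)²F₃²)`. -/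
theorem two_step_force_no_collisions_iff
    (F₁ F₂ F₃ A B : ℝ)
    (hF₂ : 0 < F₂) (hF₁₂ : F₂ < F₁) (hF₂₃ : F₂ < F₃)
    (hA : 1 < A) (hAB : A < B) :
    (∀ t, 0 ≤ t → ∀ x₁ ∈ Icc (0:ℝ) 1, ∀ x₂ ∈ Icc (0:ℝ) 1, x₁ ≠ x₂ →
        twoStepTraj F₁ F₂ F₃ A B x₁ t ≠ twoStepTraj F₁ F₂ F₃ A B x₂ t) ↔
      B - A ≤
        F₁ * (F₃ - F₁) * (F₃ * (F₁ - F₂) + F₁ * (F₃ - F₂)) / ((F₁ - F₂) ^ 2 * F₃ ^ 2)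
          * (A - 1) := by
  constructor
  · intro hnc
    by_contra hncond
    push_neg at hncond
    obtain ⟨t, ht, x₁, hx₁mem, hx₁ne, heq⟩ := collision_exists hF₂ hF₁₂ hF₂₃ hA hAB hncond
    exact hnc t ht x₁ hx₁mem 1 ⟨zero_le_one, le_refl 1⟩ hx₁ne heq
  · intro hcond t ht x₁ hx₁ x₂ hx₂ hne
    rcases hne.lt_or_gt with h | h
    · exact no_collision hF₂ hF₁₂ hF₂₃ hA hAB hcond ht hx₂.2 h
    · exact (no_collision hF₂ hF₁₂ hF₂₃ hA hAB hcond ht hx₁.2 h).symm
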